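/- arXiv:0906.4010 — 4 statements merged into one kernel-verified Lean document; each statement's English description precedes it below -/
import Mathlib

section
/- For any bounded sequence x = {x_n} in a normed vector space V, the limit as n → ∞ of sup_j (1/n)‖∑_{i=0}^{n-1} x_{i+j}‖ exists. -/
open Filter Topology

/-! Let `a n` be the largest norm of a block `x j + ⋯ + x (j + n - 1)` of `n` consecutive terms.
A block of length `m + n` splits into blocks of lengths `m` and `n`, so `a` is subadditive, and
Fekete's lemma gives convergence of `a n / n`. Boundedness of `x` keeps every `a n` finite. -/

section BlockNorm

variable {E : Type*} [SeminormedAddCommGroup E] {x : ℕ → E} {M : ℝ}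

theorem norm_sum_range_shift_le (hx : ∀ n, ‖x n‖ ≤ M) (n j : ℕ) :
    ‖∑ i ∈ Finset.range n, x (i + j)‖ ≤ n * M := by
  simpa using norm_sum_le_of_le (Finset.range n) fun i _ => hx (i + j)

theorem bddAbove_range_norm_sum_shift (hx : ∀ n, ‖x n‖ ≤ M) (n : ℕ) :
    BddAbove (Set.range fun j => ‖∑ i ∈ Finset.range n, x (i + j)‖) :=
  ⟨n * M, Set.forall_mem_range.2 (norm_sum_range_shift_le hx n)⟩

theorem subadditive_iSup_norm_sum_shift (hx : ∀ n, ‖x n‖ ≤ M) :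
    Subadditive fun n => ⨆ j, ‖∑ i ∈ Finset.range n, x (i + j)‖ := by
  intro m n
  refine ciSup_le fun j => ?_
  have hsplit : ∑ i ∈ Finset.range (m + n), x (i + j) =
      ∑ i ∈ Finset.range m, x (i + j) + ∑ i ∈ Finset.range n, x (i + (m + j)) := by
    rw [Finset.sum_range_add]
    congr 1
    exact Finset.sum_congr rfl fun i _ => by rw [add_comm m i, add_assoc]
  rw [hsplit]
  exact (norm_add_le _ _).trans <| add_le_add
    (le_ciSup (bddAbove_range_norm_sum_shift hx m) j)
    (le_ciSup (bddAbove_range_norm_sum_shift hx n) (m + j))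

end BlockNorm

/-- For any bounded sequence `x` in a normed vector space `V`, the limit as `n → ∞` of
`sup_j (1/n)‖∑_{i=0}^{n-1} x_{i+j}‖` exists. -/
theorem stmt_0 {V : Type*} [NormedAddCommGroup V] (x : ℕ → V)
    (hx : ∃ M : ℝ, ∀ n, ‖x n‖ ≤ M) :
    ∃ l : ℝ, Tendsto
      (fun n : ℕ => ⨆ j : ℕ, ‖∑ i ∈ Finset.range n, x (i + j)‖ / (n : ℝ))
      atTop (𝓝 l) := by
  obtain ⟨M, hM⟩ := hx
  have hsub := subadditive_iSup_norm_sum_shift hM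
  have hbdd : BddBelow (Set.range fun n : ℕ => (⨆ j, ‖∑ i ∈ Finset.range n, x (i + j)‖) / n) :=
    ⟨0, Set.forall_mem_range.2 fun n =>
      div_nonneg (Real.iSup_nonneg fun _ => norm_nonneg _) n.cast_nonneg⟩
  refine ⟨hsub.lim, (hsub.tendsto_lim hbdd).congr fun n => ?_⟩
  simp_rw [div_eq_mul_inv]
  exact Real.iSup_mul_of_nonneg (by positivity) _
end

section
/- A bounded linear functional L on ℓ^∞(V) with ‖L‖ ≤ 1 is shift-invariant (L ∘ T = L) if and only if |L(x)| ≤ p(x) for all x ∈ ℓ^∞(V). -/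
/-!
If `L` is shift-invariant, it takes the same value at `x` and at the Cesàro average
`n⁻¹ (x + Tx + ⋯ + Tⁿ⁻¹x)`, whose norm is at most the supremum in the definition of `p`;
since `‖L‖ ≤ 1`, letting `n → ∞` gives `|L x| ≤ p x`. Conversely, the block sums of
`Tx - x` telescope to `x (n + j) - x j`, so `p (Tx - x) = 0` and hence `L (Tx) = L x`.
-/

open Filter Topology BoundedContinuousFunction

/-- The left shift operator on `ℓ^∞(V)`, realized as bounded continuous functions `ℕ →ᵇ V`. -/
noncomputable def leftShift {V : Type*} [NormedAddCommGroup V] (x : ℕ →ᵇ V) : ℕ →ᵇ V :=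
  BoundedContinuousFunction.ofNormedAddCommGroup (fun n => x (n + 1))
    (continuous_of_discreteTopology) ‖x‖ (fun n => x.norm_coe_le_norm (n + 1))

section Shift

variable {V : Type*} [NormedAddCommGroup V]

@[simp]
lemma leftShift_apply (x : ℕ →ᵇ V) (n : ℕ) : leftShift x n = x (n + 1) := rfl

lemma leftShift_iterate_apply (j : ℕ) (x : ℕ →ᵇ V) (k : ℕ) :
    (leftShift^[j] x) k = x (k + j) := by
  induction j generalizing x with
  | zero => rfl
  | succ j ih => rw [Function.iterate_succ_apply, ih, leftShift_apply, add_assoc]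

/-- `p y` is the limit of this as `n → ∞`. -/
noncomputable def supBlockAverage (y : ℕ →ᵇ V) (n : ℕ) : ℝ :=
  ⨆ j : ℕ, ‖∑ i ∈ Finset.range n, y (i + j)‖ / (n : ℝ)

lemma supBlockAverage_nonneg (y : ℕ →ᵇ V) (n : ℕ) : 0 ≤ supBlockAverage y n :=
  Real.iSup_nonneg fun _ => by positivity

lemma norm_sum_range_apply_add_le (y : ℕ →ᵇ V) (n j : ℕ) :
    ‖∑ i ∈ Finset.range n, y (i + j)‖ ≤ ‖y‖ * n :=
  calc ‖∑ i ∈ Finset.range n, y (i + j)‖ ≤ ∑ i ∈ Finset.range n, ‖y (i + j)‖ := norm_sum_le _ _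
    _ ≤ ∑ _i ∈ Finset.range n, ‖y‖ := Finset.sum_le_sum fun _ _ => y.norm_coe_le_norm _
    _ = ‖y‖ * n := by simp [mul_comm]

lemma bddAbove_range_blockAverage (y : ℕ →ᵇ V) (n : ℕ) :
    BddAbove (Set.range fun j : ℕ => ‖∑ i ∈ Finset.range n, y (i + j)‖ / (n : ℝ)) := by
  refine ⟨‖y‖, ?_⟩
  rintro _ ⟨j, rfl⟩
  exact div_le_of_le_mul₀ n.cast_nonneg (norm_nonneg y) (norm_sum_range_apply_add_le y n j)

lemma sum_range_leftShift_sub_apply (x : ℕ →ᵇ V) (n j : ℕ) :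
    ∑ i ∈ Finset.range n, (leftShift x - x) (i + j) = x (n + j) - x j := by
  simpa [add_right_comm _ 1 j] using Finset.sum_range_sub (fun i => x (i + j)) n

lemma supBlockAverage_leftShift_sub_le (x : ℕ →ᵇ V) (n : ℕ) :
    supBlockAverage (leftShift x - x) n ≤ 2 * ‖x‖ / n := by
  refine Real.iSup_le (fun j => ?_) (by positivity)
  rw [sum_range_leftShift_sub_apply]
  gcongr
  calc ‖x (n + j) - x j‖ ≤ ‖x (n + j)‖ + ‖x j‖ := norm_sub_le _ _
    _ ≤ ‖x‖ + ‖x‖ := add_le_add (x.norm_coe_le_norm _) (x.norm_coe_le_norm _)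
    _ = 2 * ‖x‖ := (two_mul _).symm

lemma tendsto_supBlockAverage_leftShift_sub (x : ℕ →ᵇ V) :
    Tendsto (supBlockAverage (leftShift x - x)) atTop (𝓝 0) :=
  squeeze_zero (supBlockAverage_nonneg _) (supBlockAverage_leftShift_sub_le x)
    (tendsto_const_div_atTop_nhds_zero_nat _)

variable [NormedSpace ℝ V]

noncomputable def shiftAverage (n : ℕ) (x : ℕ →ᵇ V) : ℕ →ᵇ V :=
  (n : ℝ)⁻¹ • ∑ j ∈ Finset.range n, leftShift^[j] x

lemma shiftAverage_apply (n : ℕ) (x : ℕ →ᵇ V) (k : ℕ) :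
    shiftAverage n x k = (n : ℝ)⁻¹ • ∑ i ∈ Finset.range n, x (i + k) := by
  simp only [shiftAverage, coe_smul, coe_sum, Finset.sum_apply,
    leftShift_iterate_apply, add_comm k]

lemma norm_shiftAverage_le (n : ℕ) (x : ℕ →ᵇ V) :
    ‖shiftAverage n x‖ ≤ supBlockAverage x n := by
  refine (norm_le (supBlockAverage_nonneg x n)).2 fun k => ?_
  rw [shiftAverage_apply, norm_smul, norm_inv, RCLike.norm_natCast, inv_mul_eq_div]
  exact le_ciSup (bddAbove_range_blockAverage x n) k

lemma map_shiftAverage {F 𝓛 : Type*} [AddCommGroup F] [Module ℝ F] [FunLike 𝓛 (ℕ →ᵇ V) F]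
    [LinearMapClass 𝓛 ℝ (ℕ →ᵇ V) F] (L : 𝓛) (hL : ∀ x, L (leftShift x) = L x)
    {n : ℕ} (hn : n ≠ 0) (x : ℕ →ᵇ V) : L (shiftAverage n x) = L x := by
  have hiter (j : ℕ) : L (leftShift^[j] x) = L x :=
    congrFun (Function.iterate_invariant (funext hL) j) x
  simp only [shiftAverage, map_smul, map_sum, hiter, Finset.sum_const, Finset.card_range]
  rw [← Nat.cast_smul_eq_nsmul ℝ, smul_smul, inv_mul_cancel₀ (Nat.cast_ne_zero.2 hn), one_smul]

end Shift

/-- A bounded linear functional `L` on `ℓ^∞(V)` with `‖L‖ ≤ 1` is shift-invariant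
if and only if `|L(x)| ≤ p(x)` for all `x`. -/
theorem stmt_10 {V : Type*} [NormedAddCommGroup V] [NormedSpace ℝ V]
    (p : (ℕ →ᵇ V) → ℝ)
    (hp : ∀ y : ℕ →ᵇ V,
      Tendsto (fun n : ℕ => ⨆ j : ℕ, ‖∑ i ∈ Finset.range n, y (i + j)‖ / (n : ℝ))
        atTop (𝓝 (p y)))
    (L : (ℕ →ᵇ V) →L[ℝ] ℝ) (hLnorm : ‖L‖ ≤ 1) :
    (∀ x : ℕ →ᵇ V, L (leftShift x) = L x) ↔ (∀ x : ℕ →ᵇ V, |L x| ≤ p x) := by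
  constructor
  · intro hL x
    refine ge_of_tendsto (hp x) ?_
    filter_upwards [eventually_ne_atTop 0] with n hn
    calc |L x| = ‖L (shiftAverage n x)‖ := by rw [map_shiftAverage L hL hn, Real.norm_eq_abs]
      _ ≤ ‖shiftAverage n x‖ := L.le_of_opNorm_le hLnorm _ |>.trans_eq (one_mul _)
      _ ≤ supBlockAverage x n := norm_shiftAverage_le n x
  · intro h x
    have hp_zero : p (leftShift x - x) = 0 :=
      tendsto_nhds_unique (hp _) (tendsto_supBlockAverage_leftShift_sub x)
    have hL_zero : L (leftShift x - x) = 0 := abs_nonpos_iff.1 (hp_zero ▸ h _)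
    rwa [map_sub, sub_eq_zero] at hL_zero
end

section
/- For every bounded sequence x in a normed space V, there exists a Banach limit functional L₀ on ℓ^∞(V) with L₀(x) = p(x). -/
/-!
The limit `p` of the block-average seminorms `y ↦ sup_j ‖∑_{i<n} y (i + j)‖ / n` is a seminorm
with `p ≤ ‖·‖`, and it kills every `leftShift y - y`, because that block sum telescopes to
`y (n + j) - y j`. Hahn–Banach gives a linear `L` with `|L| ≤ p` and `L x = p x`; then
`|L| ≤ ‖·‖` bounds its norm by `1` and `|L (leftShift y - y)| ≤ 0` makes it shift invariant.
-/

open Filter Topology BoundedContinuousFunction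

namespace Seminorm

variable {ι 𝕜 E : Type*} [SeminormedRing 𝕜] [AddCommGroup E] [Module 𝕜 E]

def ofTendsto {l : Filter ι} [l.NeBot] (q : ι → Seminorm 𝕜 E) (p : E → ℝ)
    (h : ∀ y, Tendsto (fun i => q i y) l (𝓝 (p y))) : Seminorm 𝕜 E :=
  Seminorm.of p
    (fun y z => le_of_tendsto_of_tendsto' (h _) ((h y).add (h z)) fun i => map_add_le_add _ _ _)
    (fun c y => tendsto_nhds_unique (h _) <| by
      simpa only [map_smul_eq_mul] using (h y).const_mul ‖c‖)

theorem exists_dual_abs_le_and_eq_apply [Module ℝ E] (p : Seminorm ℝ E) (x : E) :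
    ∃ g : Module.Dual ℝ E, (∀ y, |g y| ≤ p y) ∧ g x = p x := by
  have H : ∀ c : ℝ, c • x = 0 → c • p x = 0 := fun c hc => by
    have : |c| * p x = 0 := by rw [← Real.norm_eq_abs, ← map_smul_eq_mul, hc, map_zero]
    rw [smul_eq_mul, ← abs_eq_zero, abs_mul, abs_of_nonneg (apply_nonneg p x), this]
  let f : E →ₗ.[ℝ] ℝ := LinearPMap.mkSpanSingleton' x (p x) H
  have hf : ∀ z : f.domain, f z ≤ p z := by
    rintro ⟨_, hz⟩
    obtain ⟨c, rfl⟩ := Submodule.mem_span_singleton.1 hz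
    rw [LinearPMap.mkSpanSingleton'_apply x (p x) H c hz, map_smul_eq_mul, smul_eq_mul,
      Real.norm_eq_abs]
    exact mul_le_mul_of_nonneg_right (le_abs_self c) (apply_nonneg p x)
  obtain ⟨g, hgf, hgp⟩ := Module.Dual.exists_extension_of_le_seminorm_real f.domain f.toFun hf
  have hx : x ∈ f.domain := Submodule.mem_span_singleton_self x
  exact ⟨g, hgp, (hgf ⟨x, hx⟩).trans (LinearPMap.mkSpanSingleton'_apply_self x (p x) H hx)⟩

end Seminorm

theorem exists_invariant_functional_eq_of_seminorm {E : Type*} [NormedAddCommGroup E]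
    [NormedSpace ℝ E] (p : Seminorm ℝ E) (hp : ∀ y, p y ≤ ‖y‖) (T : E → E)
    (hT : ∀ y, p (T y - y) = 0) (x : E) :
    ∃ L : E →L[ℝ] ℝ, ‖L‖ ≤ 1 ∧ (∀ y, L (T y) = L y) ∧ L x = p x := by
  obtain ⟨g, hgp, hgx⟩ := p.exists_dual_abs_le_and_eq_apply x
  have hg_norm : ∀ y, ‖g y‖ ≤ 1 * ‖y‖ := fun y => by
    rw [one_mul, Real.norm_eq_abs]
    exact (hgp y).trans (hp y)
  refine ⟨g.mkContinuous 1 hg_norm, g.mkContinuous_norm_le zero_le_one hg_norm,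
    fun y => ?_, hgx⟩
  have : |g (T y - y)| ≤ 0 := (hgp _).trans_eq (hT y)
  rw [map_sub, abs_nonpos_iff, sub_eq_zero] at this
  exact this

section BlockAverage

variable {𝕜 V : Type*} [NormedField 𝕜] [NormedAddCommGroup V] [NormedSpace 𝕜 V]

theorem norm_sum_range_add_le (y : ℕ →ᵇ V) (n j : ℕ) :
    ‖∑ i ∈ Finset.range n, y (i + j)‖ ≤ n * ‖y‖ := by
  simpa using norm_sum_le_of_le (Finset.range n) fun i _ => y.norm_coe_le_norm (i + j)

theorem norm_sum_range_add_div_le (y : ℕ →ᵇ V) (n j : ℕ) :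
    ‖∑ i ∈ Finset.range n, y (i + j)‖ / n ≤ ‖y‖ :=
  div_le_of_le_mul₀ n.cast_nonneg (norm_nonneg y) <| by
    rw [mul_comm]; exact norm_sum_range_add_le y n j

theorem bddAbove_range_norm_sum_range_add_div (y : ℕ →ᵇ V) (n : ℕ) :
    BddAbove (Set.range fun j : ℕ => ‖∑ i ∈ Finset.range n, y (i + j)‖ / n) :=
  ⟨‖y‖, Set.forall_mem_range.2 (norm_sum_range_add_div_le y n)⟩

variable (𝕜) in
noncomputable def blockAverage (n : ℕ) : Seminorm 𝕜 (ℕ →ᵇ V) :=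
  Seminorm.of (fun y => ⨆ j : ℕ, ‖∑ i ∈ Finset.range n, y (i + j)‖ / n)
    (fun y z => ciSup_le fun j => by
      calc ‖∑ i ∈ Finset.range n, (y + z) (i + j)‖ / n
          ≤ ‖∑ i ∈ Finset.range n, y (i + j)‖ / n + ‖∑ i ∈ Finset.range n, z (i + j)‖ / n := by
            rw [← add_div]
            gcongr
            simpa only [coe_add, Pi.add_apply, Finset.sum_add_distrib] using norm_add_le _ _
        _ ≤ _ := add_le_add (le_ciSup (bddAbove_range_norm_sum_range_add_div y n) j)
            (le_ciSup (bddAbove_range_norm_sum_range_add_div z n) j))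
    (fun c y => by
      simp only [coe_smul, ← Finset.smul_sum, norm_smul, mul_div_assoc]
      exact (Real.mul_iSup_of_nonneg (norm_nonneg c) _).symm)

theorem blockAverage_le_norm (n : ℕ) (y : ℕ →ᵇ V) : blockAverage 𝕜 n y ≤ ‖y‖ :=
  ciSup_le (norm_sum_range_add_div_le y n)

theorem sum_range_leftShift_sub (y : ℕ →ᵇ V) (n j : ℕ) :
    ∑ i ∈ Finset.range n, (leftShift y - y) (i + j) = y (n + j) - y j := by
  have h : ∀ i, (leftShift y - y) (i + j) = y (i + 1 + j) - y (i + j) := fun i => by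
    simp only [coe_sub, Pi.sub_apply, leftShift, coe_ofNormedAddCommGroup, Nat.add_right_comm]
  simpa only [h, zero_add] using Finset.sum_range_sub (fun k => y (k + j)) n

theorem blockAverage_leftShift_sub_le (n : ℕ) (y : ℕ →ᵇ V) :
    blockAverage 𝕜 n (leftShift y - y) ≤ 2 * ‖y‖ / n :=
  ciSup_le fun j => by
    rw [sum_range_leftShift_sub]
    gcongr
    calc ‖y (n + j) - y j‖ ≤ ‖y (n + j)‖ + ‖y j‖ := norm_sub_le _ _
      _ ≤ 2 * ‖y‖ := by linarith [y.norm_coe_le_norm (n + j), y.norm_coe_le_norm j]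

theorem tendsto_blockAverage_leftShift_sub (y : ℕ →ᵇ V) :
    Tendsto (fun n => blockAverage 𝕜 n (leftShift y - y)) atTop (𝓝 0) :=
  squeeze_zero (fun _ => apply_nonneg _ _) (fun n => blockAverage_leftShift_sub_le n y)
    (tendsto_const_nhds.div_atTop tendsto_natCast_atTop_atTop)

end BlockAverage

/-- For every bounded sequence `x` in a normed space `V`, there exists a Banach limit
functional `L₀` on `ℓ^∞(V)` with `L₀(x) = p(x)`. -/
theorem stmt_13 {V : Type*} [NormedAddCommGroup V] [NormedSpace ℝ V]
    (p : (ℕ →ᵇ V) → ℝ)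
    (hp : ∀ y : ℕ →ᵇ V,
      Tendsto (fun n : ℕ => ⨆ j : ℕ, ‖∑ i ∈ Finset.range n, y (i + j)‖ / (n : ℝ))
        atTop (𝓝 (p y)))
    (x : ℕ →ᵇ V) :
    ∃ L : (ℕ →ᵇ V) →L[ℝ] ℝ, ‖L‖ ≤ 1 ∧ (∀ y : ℕ →ᵇ V, L (leftShift y) = L y) ∧
      L x = p x := by
  let P : Seminorm ℝ (ℕ →ᵇ V) := Seminorm.ofTendsto (blockAverage ℝ) p hp
  have hP_le : ∀ y, P y ≤ ‖y‖ := fun y =>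
    le_of_tendsto' (hp y) fun n => blockAverage_le_norm (𝕜 := ℝ) n y
  have hP_shift : ∀ y, P (leftShift y - y) = 0 := fun y =>
    tendsto_nhds_unique (hp _) (tendsto_blockAverage_leftShift_sub (𝕜 := ℝ) y)
  exact exists_invariant_functional_eq_of_seminorm P hP_le leftShift hP_shift x
end

section
/- A bounded sequence x in a normed space V is strongly almost convergent to v (i.e., L(x) = L(ṽ) for all Banach limit functionals L) if and only if p(x − ṽ) = 0. -/
open Filter Topology BoundedContinuousFunction

/-!
The Cesàro means `Aₙ = n⁻¹ ∑_{k<n} Tᵏ` of the shift `T` satisfy `p y = lim ‖Aₙ y‖`, so `p` is a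
seminorm dominated by the norm, and it vanishes on `T z - z` because
`Aₙ (T - 1) = n⁻¹ (Tⁿ - 1)`. A Banach limit `L` satisfies `L ∘ Aₙ = L`, hence
`|L y| ≤ ‖Aₙ y‖ → p y`. Conversely, Hahn–Banach extends `c • y ↦ c p(y)` to a functional
dominated by `p`; it is then a Banach limit with `L y = p y`. Apply both to `y = x - ṽ`.
-/

open Finset

section CesaroMean

variable {E : Type*} [NormedAddCommGroup E] [NormedSpace ℝ E]

noncomputable def cesaroMean (T : E →L[ℝ] E) (n : ℕ) : E →L[ℝ] E :=
  (n : ℝ)⁻¹ • ∑ k ∈ range n, T ^ k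

variable {T : E →L[ℝ] E}

lemma norm_pow_apply_le (hT : ‖T‖ ≤ 1) (k : ℕ) (x : E) : ‖(T ^ k) x‖ ≤ ‖x‖ := by
  induction k with
  | zero => simp
  | succ k ih =>
    rw [pow_succ', mul_apply_eq_comp]
    exact (T.le_of_opNorm_le hT _).trans (by rw [one_mul]; exact ih)

lemma norm_cesaroMean_apply_le (hT : ‖T‖ ≤ 1) (n : ℕ) (x : E) : ‖cesaroMean T n x‖ ≤ ‖x‖ := by
  rcases eq_or_ne n 0 with rfl | hn
  · simp [cesaroMean]
  calc ‖cesaroMean T n x‖ = (n : ℝ)⁻¹ * ‖∑ k ∈ range n, (T ^ k) x‖ := by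
        simp [cesaroMean, norm_smul]
    _ ≤ (n : ℝ)⁻¹ * ∑ _k ∈ range n, ‖x‖ := by
        gcongr
        exact (norm_sum_le _ _).trans (sum_le_sum fun k _ => norm_pow_apply_le hT k x)
    _ = ‖x‖ := by simp [hn]

lemma cesaroMean_mul_sub_one (T : E →L[ℝ] E) (n : ℕ) :
    cesaroMean T n * (T - 1) = (n : ℝ)⁻¹ • (T ^ n - 1) := by
  rw [cesaroMean, smul_mul_assoc, geom_sum_mul]

lemma tendsto_norm_cesaroMean_apply_sub (hT : ‖T‖ ≤ 1) (z : E) :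
    Tendsto (fun n => ‖cesaroMean T n (T z - z)‖) atTop (𝓝 0) := by
  refine squeeze_zero (fun n => norm_nonneg _) (fun n => ?_)
    (tendsto_const_div_atTop_nhds_zero_nat (2 * ‖z‖))
  have h := congr($(cesaroMean_mul_sub_one T n) z)
  simp only [mul_apply_eq_comp, _root_.sub_apply, one_apply_eq_self, FunLike.coe_smul,
    Pi.smul_apply] at h
  rw [h, norm_smul, norm_inv, Real.norm_natCast, inv_mul_eq_div]
  gcongr
  calc ‖(T ^ n) z - z‖ ≤ ‖(T ^ n) z‖ + ‖z‖ := norm_sub_le _ _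
    _ ≤ 2 * ‖z‖ := by linarith [norm_pow_apply_le hT n z]

lemma apply_pow_of_forall_apply_eq {L : StrongDual ℝ E} (hL : ∀ z, L (T z) = L z) (k : ℕ)
    (z : E) : L ((T ^ k) z) = L z := by
  induction k with
  | zero => rfl
  | succ k ih => rw [pow_succ', mul_apply_eq_comp, hL, ih]

lemma apply_cesaroMean_of_forall_apply_eq {L : StrongDual ℝ E} (hL : ∀ z, L (T z) = L z)
    {n : ℕ} (hn : n ≠ 0) (y : E) : L (cesaroMean T n y) = L y := by
  simp only [cesaroMean, FunLike.coe_smul, Pi.smul_apply, FunLike.coe_sum, Finset.sum_apply,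
    map_smul, map_sum, apply_pow_of_forall_apply_eq hL, sum_const, card_range, nsmul_eq_mul,
    smul_eq_mul]
  field_simp

lemma abs_apply_le_norm_cesaroMean {L : StrongDual ℝ E} (hL₁ : ‖L‖ ≤ 1)
    (hL : ∀ z, L (T z) = L z) {n : ℕ} (hn : n ≠ 0) (y : E) : |L y| ≤ ‖cesaroMean T n y‖ := by
  rw [← apply_cesaroMean_of_forall_apply_eq hL hn, ← Real.norm_eq_abs]
  exact (L.le_of_opNorm_le hL₁ _).trans_eq (one_mul _)

end CesaroMean

def Seminorm.ofTendsto_s14 {𝕜 E ι : Type*} [NormedField 𝕜] [AddCommGroup E] [Module 𝕜 E]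
    {l : Filter ι} [l.NeBot] (q : ι → Seminorm 𝕜 E) (p : E → ℝ)
    (hp : ∀ x, Tendsto (fun i => q i x) l (𝓝 (p x))) : Seminorm 𝕜 E :=
  Seminorm.of p
    (fun x y => le_of_tendsto_of_tendsto' (hp (x + y)) ((hp x).add (hp y))
      fun i => map_add_le_add (q i) x y)
    (fun a x => tendsto_nhds_unique (hp (a • x)) (by
      simpa only [map_smul_eq_mul] using (hp x).const_mul ‖a‖))

theorem Seminorm.exists_dual_apply_eq_and_abs_le {E : Type*} [AddCommGroup E] [Module ℝ E]
    (p : Seminorm ℝ E) (y : E) : ∃ g : Module.Dual ℝ E, g y = p y ∧ ∀ x, |g x| ≤ p x := by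
  rcases eq_or_ne y 0 with rfl | hy
  · exact ⟨0, by simp, fun x => by simp⟩
  let f : E →ₗ.[ℝ] ℝ := LinearPMap.mkSpanSingleton y (p y) hy
  have hfp : ∀ x, f x ≤ p x := by
    rintro ⟨x, hx⟩
    obtain ⟨c, rfl⟩ := Submodule.mem_span_singleton.1 hx
    rw [LinearPMap.mkSpanSingleton'_apply, RingHom.id_apply, smul_eq_mul, map_smul_eq_mul,
      Real.norm_eq_abs]
    exact mul_le_mul_of_nonneg_right (le_abs_self c) (apply_nonneg p y)
  obtain ⟨g, hgf, hgp⟩ := Module.Dual.exists_extension_of_le_seminorm_real f.domain f.toFun hfp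
  exact ⟨g, (hgf ⟨y, Submodule.mem_span_singleton_self y⟩).trans
    (LinearPMap.mkSpanSingleton'_apply_self _ _ _ _), hgp⟩

theorem exists_invariant_dual_apply_eq {E : Type*} [NormedAddCommGroup E] [NormedSpace ℝ E]
    {T : E → E} (q : Seminorm ℝ E) (hq : ∀ z, q z ≤ ‖z‖) (hqT : ∀ z, q (T z - z) = 0) (y : E) :
    ∃ L : StrongDual ℝ E, ‖L‖ ≤ 1 ∧ (∀ z, L (T z) = L z) ∧ L y = q y := by
  obtain ⟨g, hgy, hgq⟩ := q.exists_dual_apply_eq_and_abs_le y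
  have hbound : ∀ z, ‖g z‖ ≤ 1 * ‖z‖ := fun z => by
    rw [one_mul, Real.norm_eq_abs]
    exact (hgq z).trans (hq z)
  refine ⟨g.mkContinuous 1 hbound, LinearMap.mkContinuous_norm_le g zero_le_one hbound,
    fun z => ?_, hgy⟩
  have h := hgq (T z - z)
  rwa [hqT, abs_nonpos_iff, map_sub, sub_eq_zero] at h

theorem forall_invariant_dual_apply_eq_zero_iff {E : Type*} [NormedAddCommGroup E]
    [NormedSpace ℝ E] {T : E →L[ℝ] E} (hT : ‖T‖ ≤ 1) {p : E → ℝ}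
    (hp : ∀ y, Tendsto (fun n => ‖cesaroMean T n y‖) atTop (𝓝 (p y))) (y : E) :
    (∀ L : StrongDual ℝ E, ‖L‖ ≤ 1 → (∀ z, L (T z) = L z) → L y = 0) ↔ p y = 0 := by
  constructor
  · intro H
    let q := Seminorm.ofTendsto_s14 (fun n => (normSeminorm ℝ E).comp (cesaroMean T n).toLinearMap)
      p hp
    have hq : ∀ z, q z ≤ ‖z‖ := fun z =>
      le_of_tendsto' (hp z) fun n => norm_cesaroMean_apply_le hT n z
    have hqT : ∀ z, q (T z - z) = 0 := fun z =>
      tendsto_nhds_unique (hp _) (tendsto_norm_cesaroMean_apply_sub hT z)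
    obtain ⟨L, hL₁, hL, hLy⟩ := exists_invariant_dual_apply_eq q hq hqT y
    rw [← H L hL₁ hL]
    exact hLy.symm
  · intro hy L hL₁ hL
    have h : |L y| ≤ p y := ge_of_tendsto (hp y)
      ((eventually_ne_atTop 0).mono fun n hn => abs_apply_le_norm_cesaroMean hL₁ hL hn y)
    exact abs_nonpos_iff.1 (hy ▸ h)

section leftShiftCLM

variable {V : Type*} [NormedAddCommGroup V] [NormedSpace ℝ V]

noncomputable def leftShiftCLM : (ℕ →ᵇ V) →L[ℝ] (ℕ →ᵇ V) :=
  compContinuousCLM V ℝ ⟨Nat.succ, continuous_of_discreteTopology⟩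

lemma leftShiftCLM_apply (y : ℕ →ᵇ V) : leftShiftCLM y = leftShift y := by
  ext; rfl

lemma norm_leftShiftCLM_le : ‖(leftShiftCLM : (ℕ →ᵇ V) →L[ℝ] (ℕ →ᵇ V))‖ ≤ 1 :=
  ContinuousLinearMap.opNorm_le_bound _ zero_le_one fun y =>
    (norm_compContinuous_le y _).trans_eq (one_mul _).symm

lemma leftShiftCLM_pow_apply (k : ℕ) (y : ℕ →ᵇ V) (j : ℕ) :
    (leftShiftCLM ^ k) y j = y (k + j) := by
  induction k generalizing y with
  | zero => simp
  | succ k ih =>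
    rw [pow_succ, mul_apply_eq_comp, ih, leftShiftCLM_apply, add_right_comm]
    rfl

lemma norm_cesaroMean_leftShiftCLM (y : ℕ →ᵇ V) (n : ℕ) :
    ‖cesaroMean leftShiftCLM n y‖ = ⨆ j : ℕ, ‖∑ i ∈ range n, y (i + j)‖ / n := by
  rw [norm_eq_iSup_norm]
  congr 1
  funext j
  simp only [cesaroMean, FunLike.coe_smul, Pi.smul_apply, FunLike.coe_sum, Finset.sum_apply,
    BoundedContinuousFunction.coe_smul, BoundedContinuousFunction.coe_sum,
    leftShiftCLM_pow_apply, norm_smul, norm_inv, Real.norm_natCast, div_eq_inv_mul]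

end leftShiftCLM

/-- A bounded sequence `x` is strongly almost convergent to `v` (i.e. `L(x) = L(ṽ)` for
every Banach limit functional `L`) if and only if `p(x − ṽ) = 0`. -/
theorem stmt_14 {V : Type*} [NormedAddCommGroup V] [NormedSpace ℝ V]
    (p : (ℕ →ᵇ V) → ℝ)
    (hp : ∀ y : ℕ →ᵇ V,
      Tendsto (fun n : ℕ => ⨆ j : ℕ, ‖∑ i ∈ Finset.range n, y (i + j)‖ / (n : ℝ))
        atTop (𝓝 (p y)))
    (x : ℕ →ᵇ V) (v : V) :
    (∀ L : (ℕ →ᵇ V) →L[ℝ] ℝ, ‖L‖ ≤ 1 → (∀ y : ℕ →ᵇ V, L (leftShift y) = L y) →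
        L x = L (BoundedContinuousFunction.const ℕ v)) ↔
      p (x - BoundedContinuousFunction.const ℕ v) = 0 := by
  have hp' : ∀ y, Tendsto (fun n => ‖cesaroMean leftShiftCLM n y‖) atTop (𝓝 (p y)) := by
    simpa only [norm_cesaroMean_leftShiftCLM] using hp
  rw [← forall_invariant_dual_apply_eq_zero_iff norm_leftShiftCLM_le hp']
  simp only [map_sub, sub_eq_zero, leftShiftCLM_apply]
end
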